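/- arXiv:2103.05182 — 4 statements merged into one kernel-verified Lean document; each statement's English description precedes it below -/
import Mathlib

section
/- Let x = (x₁,…,x_n) be an n-tuple of nonnegative reals with x₁ ≥ x₂ ≥ … ≥ x_n ≥ 0, and let 1 ≤ k ≤ n be an integer. Then sym_k(x) ≤ (C(n,k)^{−1/k} / B(k/n)) · hsm_{k/n}(x). Moreover, equality holds if and only if x_{k+1} = 0 or k = n. -/
open MeasureTheory Filter Topology
open scoped ENNReal

noncomputable def elogr (t : ℝ) : EReal := if t ≤ 0 then ⊥ else ((Real.log t : ℝ) : EReal)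

/-- The Halász–Székely kernel, with values in `[-∞, +∞)` (`EReal`). -/
noncomputable def hsKernel (c x y : ℝ) : EReal :=
  if c = 0 then ((Real.log y + y⁻¹ * x - 1 : ℝ) : EReal)
  else ((Real.log y : ℝ) : EReal) + ((c⁻¹ : ℝ) : EReal) * elogr (c * y⁻¹ * x + 1 - c)

/-- The nonnegative part of an extended real, as an element of `[0,∞]`. -/
noncomputable def erealToENNReal (x : EReal) : ℝ≥0∞ :=
  if x = ⊤ then ⊤ else ENNReal.ofReal x.toReal

/-- Integral of an `EReal`-valued function: positive part minus negative part. -/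
noncomputable def eIntegral (μ : Measure ℝ) (f : ℝ → EReal) : EReal :=
  ((∫⁻ x, erealToENNReal (f x) ∂μ : ℝ≥0∞) : EReal) - ((∫⁻ x, erealToENNReal (-f x) ∂μ : ℝ≥0∞) : EReal)

/-- Exponential on `EReal`, with values in `[0,∞]`. -/
noncomputable def eexp (x : EReal) : ℝ≥0∞ :=
  if x = ⊤ then ⊤ else if x = ⊥ then 0 else ENNReal.ofReal (Real.exp x.toReal)

/-- The Halász–Székely barycenter `[μ]_c ∈ [0,∞]`. -/
noncomputable def hsBary (c : ℝ) (μ : Measure ℝ) : ℝ≥0∞ :=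
  eexp (⨅ y : {y : ℝ // 0 < y}, eIntegral μ (fun x => hsKernel c x y))

/-- The function `B`. -/
noncomputable def hsB (c : ℝ) : ℝ :=
  if c = 0 then 0 else if c = 1 then 1 else c * (1 - c) ^ ((1 - c) / c)

/-- The uniform probability measure on the entries of a tuple. -/
noncomputable def unifMeasure {n : ℕ} (x : Fin n → ℝ) : Measure ℝ :=
  (n : ℝ≥0∞)⁻¹ • ∑ i, MeasureTheory.Measure.dirac (x i)

/-- The Halász–Székely mean of a tuple. -/
noncomputable def hsMean (c : ℝ) {n : ℕ} (x : Fin n → ℝ) : ℝ≥0∞ := hsBary c (unifMeasure x)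

/-- The `k`-th symmetric mean of an `n`-tuple. -/
noncomputable def symMean {n : ℕ} (k : ℕ) (x : Fin n → ℝ) : ℝ :=
  ((∑ s ∈ Finset.univ.powersetCard k, ∏ i ∈ s, x i) / (n.choose k)) ^ ((k : ℝ)⁻¹)

/-!
With `c = k / n` and the substitution `r = (1 - c) y / c`, the HS mean becomes
`hsm_c(x) = B(c) · inf_{r > 0} (∏ (x_i + r) / r^(n-k))^(1/k)`. Expanding
`∏ (x_i + r) = ∑_j E_j r^(n-j)` in the elementary symmetric functions `E_j ≥ 0` shows that the
quantity under the infimum is at least `E_k`, which is the inequality. If `x_{k+1} = 0`, then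
`E_j = 0` for `j > k`, so that quantity is a polynomial in `r` taking the value `E_k` at `r = 0`,
and the infimum is `E_k`. If `x_{k+1} > 0`, then `E_{k+1} > 0`, and the two terms
`E_{k+1} r^(n-k-1) + r^n` keep it above `E_k + min(E_{k+1}, 1)`. For `k = n` both sides are the
geometric mean.
-/

namespace Multiset

theorem prod_map_add_eq_sum_esymm {R : Type*} [CommSemiring R] (s : Multiset R) (r : R) :
    (s.map (· + r)).prod = ∑ j ∈ Finset.range (card s + 1), s.esymm j * r ^ (card s - j) := by
  have := congrArg (Polynomial.eval r) (prod_X_add_C_eq_sum_esymm s)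
  simpa [Polynomial.eval_multiset_prod, Polynomial.eval_finsetSum, add_comm] using this

theorem esymm_card {R : Type*} [CommSemiring R] (s : Multiset R) :
    s.esymm (card s) = s.prod := by
  simp [esymm, powersetCard_self]

theorem prod_map_add_of_esymm_eq_zero {R : Type*} [CommSemiring R] {s : Multiset R} {k : ℕ}
    (hk : k ≤ card s) (hzero : ∀ j, k < j → s.esymm j = 0) (r : R) :
    (s.map (· + r)).prod =
      r ^ (card s - k) * ∑ j ∈ Finset.range (k + 1), s.esymm j * r ^ (k - j) := by
  rw [prod_map_add_eq_sum_esymm, Finset.mul_sum,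
    ← Finset.sum_subset (Finset.range_subset_range.2 (by omega : k + 1 ≤ card s + 1))]
  · refine Finset.sum_congr rfl fun j hj ↦ ?_
    rw [Finset.mem_range] at hj
    rw [mul_left_comm, ← pow_add]
    congr 2
    omega
  · intro j _ hj
    rw [hzero j (by simpa using hj), zero_mul]

variable {s : Multiset ℝ}

theorem esymm_nonneg (hs : ∀ a ∈ s, 0 ≤ a) (j : ℕ) : 0 ≤ s.esymm j :=
  sum_nonneg fun _ hp ↦ by
    obtain ⟨t, ht, rfl⟩ := mem_map.1 hp
    exact prod_nonneg fun a ha ↦ hs a (mem_of_le (mem_powersetCard.1 ht).1 ha)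

theorem sum_esymm_mul_pow_le_prod_map_add (hs : ∀ a ∈ s, 0 ≤ a) {r : ℝ} (hr : 0 ≤ r)
    {J : Finset ℕ} (hJ : J ⊆ Finset.range (card s + 1)) :
    ∑ j ∈ J, s.esymm j * r ^ (card s - j) ≤ (s.map (· + r)).prod := by
  rw [prod_map_add_eq_sum_esymm]
  exact Finset.sum_le_sum_of_subset_of_nonneg hJ fun j _ _ ↦
    mul_nonneg (esymm_nonneg hs j) (pow_nonneg hr _)

theorem esymm_mul_pow_le_prod_map_add (hs : ∀ a ∈ s, 0 ≤ a) {r : ℝ} (hr : 0 ≤ r) {k : ℕ}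
    (hk : k ≤ card s) : s.esymm k * r ^ (card s - k) ≤ (s.map (· + r)).prod := by
  simpa using sum_esymm_mul_pow_le_prod_map_add hs hr (J := {k}) (by simpa [Nat.lt_succ_iff])

theorem esymm_add_esymm_succ_add_pow_le_prod_map_add (hs : ∀ a ∈ s, 0 ≤ a) {r : ℝ}
    (hr : 0 ≤ r) {k : ℕ} (hk : 0 < k) (hks : k < card s) :
    s.esymm k * r ^ (card s - k) + s.esymm (k + 1) * r ^ (card s - (k + 1)) + r ^ card s ≤
      (s.map (· + r)).prod := by
  have h := sum_esymm_mul_pow_le_prod_map_add hs hr (J := {k, k + 1, 0}) (by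
    intro j; simp only [Finset.mem_insert, Finset.mem_singleton, Finset.mem_range]; omega)
  rw [Finset.sum_insert (by simp; omega), Finset.sum_insert (by simp), Finset.sum_singleton,
    Nat.sub_zero, ← add_assoc] at h
  simpa [esymm] using h

theorem esymm_add_min_mul_pow_le_prod_map_add (hs : ∀ a ∈ s, 0 ≤ a) {r : ℝ} (hr : 0 ≤ r)
    {k : ℕ} (hk : 0 < k) (hks : k < card s) :
    (s.esymm k + min (s.esymm (k + 1)) 1) * r ^ (card s - k) ≤ (s.map (· + r)).prod := by
  refine le_trans ?_ (esymm_add_esymm_succ_add_pow_le_prod_map_add hs hr hk hks)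
  rw [add_mul, add_assoc]
  gcongr
  -- the `E_{k+1}`-term dominates for `r ≤ 1`, the `r ^ card s`-term for `1 ≤ r`
  rcases le_total r 1 with hr1 | hr1
  · calc min (s.esymm (k + 1)) 1 * r ^ (card s - k)
        ≤ s.esymm (k + 1) * r ^ (card s - (k + 1)) :=
          mul_le_mul (min_le_left _ _) (pow_le_pow_of_le_one hr hr1 (by omega))
            (pow_nonneg hr _) (esymm_nonneg hs _)
      _ ≤ _ := le_add_of_nonneg_right (pow_nonneg hr _)
  · calc min (s.esymm (k + 1)) 1 * r ^ (card s - k) ≤ r ^ card s :=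
          (mul_le_of_le_one_left (pow_nonneg hr _) (min_le_right _ _)).trans
            (pow_le_pow_right₀ hr1 (by omega))
      _ ≤ _ := le_add_of_nonneg_left (mul_nonneg (esymm_nonneg hs _) (pow_nonneg hr _))

end Multiset

theorem prod_add_eq_prod_map_add {ι R : Type*} [Fintype ι] [CommSemiring R] (x : ι → R)
    (r : R) :
    ∏ i, (x i + r) = ((Finset.univ.val.map x).map (· + r)).prod := by
  rw [Multiset.map_map, Finset.prod_eq_multiset_prod]
  rfl

theorem esymm_eq_zero_of_antitone {n k : ℕ} (hkn : k < n) {x : Fin n → ℝ}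
    (hx : ∀ i, 0 ≤ x i) (hanti : Antitone x) (hxk : x ⟨k, hkn⟩ = 0) {j : ℕ} (hj : k < j) :
    (Finset.univ.val.map x).esymm j = 0 := by
  rw [Finset.esymm_map_val]
  refine Finset.sum_eq_zero fun t ht ↦ ?_
  have hcard : (Finset.Iio (⟨k, hkn⟩ : Fin n)).card < t.card := by
    rwa [Fin.card_Iio, (Finset.mem_powersetCard.1 ht).2]
  obtain ⟨i, hit, hik⟩ := Finset.exists_mem_notMem_of_card_lt_card hcard
  rw [Finset.mem_Iio, not_lt] at hik
  exact Finset.prod_eq_zero hit (le_antisymm (hxk ▸ hanti hik) (hx i))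

theorem esymm_succ_pos_of_antitone {n k : ℕ} (hkn : k < n) {x : Fin n → ℝ}
    (hx : ∀ i, 0 ≤ x i) (hanti : Antitone x) (hxk : 0 < x ⟨k, hkn⟩) :
    0 < (Finset.univ.val.map x).esymm (k + 1) := by
  rw [Finset.esymm_map_val]
  have hmem : Finset.Iic (⟨k, hkn⟩ : Fin n) ∈ Finset.univ.powersetCard (k + 1) := by
    simp [Fin.card_Iic]
  refine lt_of_lt_of_le ?_
    (Finset.single_le_sum (fun t _ ↦ Finset.prod_nonneg fun i _ ↦ hx i) hmem)
  exact Finset.prod_pos fun i hi ↦ hxk.trans_le (hanti (Finset.mem_Iic.1 hi))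

theorem eexp_eq_exp : eexp = EReal.exp := by
  ext1 x
  induction x using EReal.rec <;> simp [eexp]

theorem hsBary_eq_iInf (c : ℝ) (μ : Measure ℝ) :
    hsBary c μ =
      ⨅ y : {y : ℝ // 0 < y}, EReal.exp (eIntegral μ fun x ↦ hsKernel c x y) := by
  rw [hsBary, eexp_eq_exp, ← EReal.expOrderIso_apply, OrderIso.map_iInf]
  rfl

theorem lintegral_unifMeasure {n : ℕ} (x : Fin n → ℝ) (f : ℝ → ℝ≥0∞) :
    ∫⁻ t, f t ∂unifMeasure x = (n : ℝ≥0∞)⁻¹ * ∑ i, f (x i) := by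
  simp [unifMeasure]

theorem inv_natCast_mul_sum_ofReal {n : ℕ} (hn : 0 < n) (g : Fin n → ℝ) :
    (n : ℝ≥0∞)⁻¹ * ∑ i, ENNReal.ofReal (g i) =
      ENNReal.ofReal ((∑ i, (g i)⁺) / n) := by
  have hpos (a : ℝ) : ENNReal.ofReal a = ENNReal.ofReal a⁺ := by simp [posPart_def]
  simp_rw [hpos (g _)]
  rw [← ENNReal.ofReal_sum_of_nonneg fun i _ ↦ posPart_nonneg (g i), div_eq_inv_mul,
    ENNReal.ofReal_mul (by positivity), ENNReal.ofReal_inv_of_pos (by exact_mod_cast hn),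
    ENNReal.ofReal_natCast]

theorem eIntegral_unifMeasure {n : ℕ} (hn : 0 < n) (x : Fin n → ℝ) {f : ℝ → EReal}
    {g : Fin n → ℝ} (hfg : ∀ i, f (x i) = g i) :
    eIntegral (unifMeasure x) f = ((∑ i, g i) / n : ℝ) := by
  simp only [eIntegral, lintegral_unifMeasure, hfg, ← EReal.coe_neg, erealToENNReal,
    EReal.coe_ne_top, if_false, EReal.toReal_coe, inv_natCast_mul_sum_ofReal hn,
    EReal.coe_ennreal_ofReal]
  rw [max_eq_left (by positivity), max_eq_left (by positivity), ← EReal.coe_sub, ← sub_div,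
    ← Finset.sum_sub_distrib]
  simp

theorem eIntegral_unifMeasure_eq_bot {n : ℕ} (x : Fin n → ℝ) {f : ℝ → EReal} {i : Fin n}
    (hi : f (x i) = ⊥) : eIntegral (unifMeasure x) f = ⊥ := by
  have htop : ∑ j, erealToENNReal (-f (x j)) = ⊤ :=
    ENNReal.sum_eq_top.2 ⟨i, Finset.mem_univ i, by simp [hi, erealToENNReal]⟩
  rw [eIntegral, lintegral_unifMeasure x (erealToENNReal <| -f ·), htop,
    ENNReal.mul_top (by simp), EReal.coe_ennreal_top, EReal.sub_top]

theorem hsKernel_of_pos {c x y : ℝ} (hc : c ≠ 0) (h : 0 < c * y⁻¹ * x + 1 - c) :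
    hsKernel c x y = (Real.log y + c⁻¹ * Real.log (c * y⁻¹ * x + 1 - c) : ℝ) := by
  rw [hsKernel, if_neg hc, elogr, if_neg h.not_ge, ← EReal.coe_mul, ← EReal.coe_add]

theorem hsKernel_one_of_pos {x y : ℝ} (hx : 0 < x) (hy : 0 < y) :
    hsKernel 1 x y = Real.log x := by
  rw [hsKernel_of_pos one_ne_zero (by simp; positivity), EReal.coe_eq_coe_iff, inv_one, one_mul,
    one_mul, add_sub_cancel_right, Real.log_mul (inv_ne_zero hy.ne') hx.ne', Real.log_inv]
  ring

theorem hsKernel_one_zero (y : ℝ) : hsKernel 1 0 y = ⊥ := by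
  simp [hsKernel, elogr]

theorem hsB_of_mem_Ioo {c : ℝ} (hc0 : 0 < c) (hc1 : c < 1) :
    hsB c = c * (1 - c) ^ ((1 - c) / c) := by
  rw [hsB, if_neg hc0.ne', if_neg hc1.ne]

theorem hsB_pos {c : ℝ} (hc0 : 0 < c) (hc1 : c ≤ 1) : 0 < hsB c := by
  rcases hc1.lt_or_eq with hc1 | rfl
  · rw [hsB_of_mem_Ioo hc0 hc1]
    exact mul_pos hc0 (Real.rpow_pos_of_pos (sub_pos.2 hc1) _)
  · simp [hsB]

theorem hsB_natCast_div_pos {n k : ℕ} (hk : 0 < k) (hkn : k ≤ n) : 0 < hsB (k / n) :=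
  hsB_pos (by have : 0 < n := hk.trans_le hkn; positivity)
    (div_le_one_of_le₀ (by exact_mod_cast hkn) n.cast_nonneg)

theorem hsMean_one {n : ℕ} (hn : 0 < n) {x : Fin n → ℝ} (hx : ∀ i, 0 ≤ x i) :
    hsMean 1 x = ENNReal.ofReal ((∏ i, x i) ^ (n : ℝ)⁻¹) := by
  have : Nonempty {y : ℝ // 0 < y} := ⟨⟨1, one_pos⟩⟩
  rw [hsMean, hsBary_eq_iInf]
  by_cases hzero : ∃ i, x i = 0
  · obtain ⟨i, hi⟩ := hzero
    have hbot (y : {y : ℝ // 0 < y}) : eIntegral (unifMeasure x) (hsKernel 1 · y) = ⊥ :=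
      eIntegral_unifMeasure_eq_bot x (i := i) (by simp [hi, hsKernel_one_zero])
    simp [hbot, Finset.prod_eq_zero (Finset.mem_univ i) hi, hn.ne']
  · push Not at hzero
    have hpos i : 0 < x i := (hx i).lt_of_ne' (hzero i)
    have hlog (y : {y : ℝ // 0 < y}) : eIntegral (unifMeasure x) (hsKernel 1 · y) =
        ((∑ i, Real.log (x i)) / n : ℝ) :=
      eIntegral_unifMeasure hn x fun i ↦ hsKernel_one_of_pos (hpos i) y.2
    simp only [hlog, iInf_const, EReal.exp_coe]
    rw [Real.rpow_def_of_pos (Finset.prod_pos fun i _ ↦ hpos i),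
      Real.log_prod fun i _ ↦ (hpos i).ne', div_eq_mul_inv]

theorem exp_eIntegral_hsKernel_unifMeasure {c : ℝ} (hc0 : 0 < c) (hc1 : c < 1) {n : ℕ}
    (hn : 0 < n) {x : Fin n → ℝ} (hx : ∀ i, 0 ≤ x i) {y : ℝ} (hy : 0 < y) :
    EReal.exp (eIntegral (unifMeasure x) (hsKernel c · y)) =
      ENNReal.ofReal (hsB c * (((1 - c) * y / c) ^ (-(1 - c) / c) *
        (∏ i, (x i + (1 - c) * y / c)) ^ (c * n)⁻¹)) := by
  set r := (1 - c) * y / c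
  have h1c : 0 < 1 - c := sub_pos.2 hc1
  have hr : 0 < r := by positivity
  have hxr i : 0 < x i + r := by linarith [hx i]
  have harg i : c * y⁻¹ * x i + 1 - c = c / y * (x i + r) := by
    simp only [r]; field_simp; ring
  have hK i : hsKernel c (x i) y = (Real.log y + c⁻¹ * Real.log (c / y * (x i + r)) : ℝ) := by
    rw [hsKernel_of_pos hc0.ne' (by rw [harg]; exact mul_pos (div_pos hc0 hy) (hxr i)), harg]
  rw [eIntegral_unifMeasure hn x hK, EReal.exp_coe]
  congr 1
  have hP : 0 < ∏ i, (x i + r) := Finset.prod_pos fun i _ ↦ hxr i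
  rw [← Real.exp_log (mul_pos (hsB_pos hc0 hc1.le) (by positivity) : 0 < hsB c *
    (r ^ (-(1 - c) / c) * (∏ i, (x i + r)) ^ (c * n)⁻¹))]
  congr 1
  rw [Real.log_mul (hsB_pos hc0 hc1.le).ne' (by positivity), hsB_of_mem_Ioo hc0 hc1,
    Real.log_mul (x := r ^ _) (by positivity) (by positivity),
    Real.log_mul hc0.ne' (by positivity),
    Real.log_rpow h1c, Real.log_rpow hr, Real.log_rpow hP, Real.log_prod fun i _ ↦ (hxr i).ne']
  simp only [Real.log_mul (div_pos hc0 hy).ne' (hxr _).ne', Real.log_div hc0.ne' hy.ne', r,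
    Real.log_div (mul_pos h1c hy).ne' hc0.ne', Real.log_mul h1c.ne' hy.ne',
    Finset.sum_add_distrib, Finset.sum_const, Finset.card_univ, Fintype.card_fin,
    ← Finset.mul_sum, nsmul_eq_mul]
  field_simp
  ring

theorem hsMean_eq_iInf {c : ℝ} (hc0 : 0 < c) (hc1 : c < 1) {n : ℕ} (hn : 0 < n)
    {x : Fin n → ℝ} (hx : ∀ i, 0 ≤ x i) :
    hsMean c x = ⨅ r : {r : ℝ // 0 < r},
      ENNReal.ofReal
        (hsB c * ((r : ℝ) ^ (-(1 - c) / c) * (∏ i, (x i + r)) ^ (c * n)⁻¹)) := by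
  have h1c : 0 < 1 - c := sub_pos.2 hc1
  have hscale : Function.Surjective fun y : {y : ℝ // 0 < y} ↦
      (⟨(1 - c) * y / c, by have := y.2; positivity⟩ : {r : ℝ // 0 < r}) :=
    fun r ↦ ⟨⟨c * r / (1 - c), by have := r.2; positivity⟩, by
      ext; simp only; field_simp⟩
  rw [hsMean, hsBary_eq_iInf]
  refine (iInf_congr fun y ↦ ?_).trans (hscale.iInf_comp _)
  exact exp_eIntegral_hsKernel_unifMeasure hc0 hc1 hn hx y.2

theorem rpow_neg_mul_rpow_eq_div_pow_rpow {n k : ℕ} (hk : 0 < k) (hkn : k < n) {r P : ℝ}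
    (hr : 0 < r) (hP : 0 ≤ P) :
    r ^ (-(1 - (k / n : ℝ)) / (k / n)) * P ^ ((k / n : ℝ) * n)⁻¹ =
      (P / r ^ (n - k)) ^ (k : ℝ)⁻¹ := by
  have hk' : (0 : ℝ) < k := by exact_mod_cast hk
  have hn' : (0 : ℝ) < n := by exact_mod_cast hk.trans hkn
  have hexp : -(1 - (k / n : ℝ)) / (k / n) = ((n - k : ℕ) : ℝ) * -(k : ℝ)⁻¹ := by
    rw [Nat.cast_sub hkn.le]; field_simp
  rw [hexp, div_mul_cancel₀ _ hn'.ne', Real.rpow_mul hr.le, Real.rpow_natCast,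
    Real.div_rpow hP (by positivity), Real.rpow_neg (by positivity), div_eq_mul_inv, mul_comm]

theorem hsMean_div_eq_iInf {n k : ℕ} (hk : 0 < k) (hkn : k < n) {x : Fin n → ℝ}
    (hx : ∀ i, 0 ≤ x i) :
    hsMean (k / n) x = ⨅ r : {r : ℝ // 0 < r},
      ENNReal.ofReal
        (hsB (k / n) * ((∏ i, (x i + r)) / (r : ℝ) ^ (n - k)) ^ (k : ℝ)⁻¹) := by
  have hn : 0 < n := hk.trans hkn
  have hc0 : (0 : ℝ) < k / n := by positivity
  have hc1 : (k / n : ℝ) < 1 := (div_lt_one (by positivity)).2 (by exact_mod_cast hkn)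
  rw [hsMean_eq_iInf hc0 hc1 hn hx]
  refine iInf_congr fun r ↦ ?_
  rw [rpow_neg_mul_rpow_eq_div_pow_rpow hk hkn r.2
    (Finset.prod_nonneg fun i _ ↦ by linarith [hx i, r.2])]

theorem ofReal_hsB_mul_rpow_le_hsMean {n k : ℕ} (hk : 0 < k) (hkn : k < n) {x : Fin n → ℝ}
    (hx : ∀ i, 0 ≤ x i) {E : ℝ} (hE : 0 ≤ E)
    (hbound : ∀ r : ℝ, 0 < r → E * r ^ (n - k) ≤ ∏ i, (x i + r)) :
    ENNReal.ofReal (hsB (k / n) * E ^ (k : ℝ)⁻¹) ≤ hsMean (k / n) x := by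
  rw [hsMean_div_eq_iInf hk hkn hx]
  refine le_iInf fun r ↦ ENNReal.ofReal_le_ofReal
    (mul_le_mul_of_nonneg_left ?_ (hsB_natCast_div_pos hk hkn.le).le)
  exact Real.rpow_le_rpow hE ((le_div_iff₀ (pow_pos r.2 _)).2 (hbound r r.2)) (by positivity)

theorem ofReal_hsB_mul_esymm_rpow_le_hsMean {n k : ℕ} (hk : 0 < k) (hkn : k < n)
    {x : Fin n → ℝ} (hx : ∀ i, 0 ≤ x i) :
    ENNReal.ofReal (hsB (k / n) * (Finset.univ.val.map x).esymm k ^ (k : ℝ)⁻¹) ≤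
      hsMean (k / n) x := by
  have hs0 : ∀ a ∈ Finset.univ.val.map x, 0 ≤ a := by simpa using hx
  refine ofReal_hsB_mul_rpow_le_hsMean hk hkn hx (Multiset.esymm_nonneg hs0 k) fun r hr ↦ ?_
  have := Multiset.esymm_mul_pow_le_prod_map_add hs0 hr.le (k := k) (by simpa using hkn.le)
  rwa [Multiset.card_map, Finset.card_val, Finset.card_univ, Fintype.card_fin,
    ← prod_add_eq_prod_map_add] at this

theorem ofReal_hsB_mul_esymm_rpow_lt_hsMean {n k : ℕ} (hk : 0 < k) (hkn : k < n)
    {x : Fin n → ℝ} (hx : ∀ i, 0 ≤ x i) (hpos : 0 < (Finset.univ.val.map x).esymm (k + 1)) :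
    ENNReal.ofReal (hsB (k / n) * (Finset.univ.val.map x).esymm k ^ (k : ℝ)⁻¹) <
      hsMean (k / n) x := by
  set s := Finset.univ.val.map x
  have hs : Multiset.card s = n := by simp [s]
  have hs0 : ∀ a ∈ s, 0 ≤ a := by simpa [s] using hx
  have hE := Multiset.esymm_nonneg hs0 k
  have hq : 0 < min (s.esymm (k + 1)) 1 := lt_min hpos one_pos
  have hB := hsB_natCast_div_pos hk hkn.le
  refine lt_of_lt_of_le ?_ (ofReal_hsB_mul_rpow_le_hsMean hk hkn hx
    (E := s.esymm k + min (s.esymm (k + 1)) 1) (by positivity) fun r hr ↦ ?_)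
  · rw [ENNReal.ofReal_lt_ofReal_iff (by positivity)]
    gcongr
    linarith
  · have := Multiset.esymm_add_min_mul_pow_le_prod_map_add hs0 hr.le hk (hs ▸ hkn)
    rwa [hs, ← prod_add_eq_prod_map_add] at this

theorem hsMean_le_ofReal_hsB_mul_esymm_rpow {n k : ℕ} (hk : 0 < k) (hkn : k < n)
    {x : Fin n → ℝ} (hx : ∀ i, 0 ≤ x i)
    (hzero : ∀ j, k < j → (Finset.univ.val.map x).esymm j = 0) :
    hsMean (k / n) x ≤
      ENNReal.ofReal (hsB (k / n) * (Finset.univ.val.map x).esymm k ^ (k : ℝ)⁻¹) := by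
  set s := Finset.univ.val.map x
  have hs : Multiset.card s = n := by simp [s]
  set p : ℝ → ℝ := fun r ↦ ∑ j ∈ Finset.range (k + 1), s.esymm j * r ^ (k - j)
  set G : ℝ → ℝ≥0∞ := fun r ↦ ENNReal.ofReal (hsB (k / n) * p r ^ (k : ℝ)⁻¹)
  have hp0 : p 0 = s.esymm k := by
    simp only [p]
    rw [Finset.sum_eq_single_of_mem k (by simp) fun j hj hjk ↦ ?_, Nat.sub_self, pow_zero,
      mul_one]
    rw [Finset.mem_range] at hj
    rw [zero_pow (by omega), mul_zero]
  have hG : Continuous G := by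
    have : 0 ≤ (k : ℝ)⁻¹ := by positivity
    exact ENNReal.continuous_ofReal.comp (by fun_prop)
  have hGr (r : {r : ℝ // 0 < r}) :
      ENNReal.ofReal (hsB (k / n) * ((∏ i, (x i + r)) / (r : ℝ) ^ (n - k)) ^ (k : ℝ)⁻¹) =
        G r := by
    rw [prod_add_eq_prod_map_add, Multiset.prod_map_add_of_esymm_eq_zero (hs ▸ hkn.le) hzero, hs,
      mul_div_cancel_left₀ _ (pow_pos r.2 _).ne']
  rw [hsMean_div_eq_iInf hk hkn hx, ← hp0]
  refine ge_of_tendsto (hG.continuousAt.tendsto.mono_left nhdsWithin_le_nhds :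
    Tendsto G (𝓝[>] 0) (𝓝 (G 0))) ?_
  filter_upwards [self_mem_nhdsWithin] with r hr
  exact iInf_le_of_le ⟨r, hr⟩ (hGr ⟨r, hr⟩).le

theorem ofReal_hsB_mul_esymm_self_rpow_eq_hsMean {n : ℕ} (hn : 0 < n) {x : Fin n → ℝ}
    (hx : ∀ i, 0 ≤ x i) :
    ENNReal.ofReal (hsB (n / n) * (Finset.univ.val.map x).esymm n ^ (n : ℝ)⁻¹) =
      hsMean (n / n) x := by
  have hprod : (Finset.univ.val.map x).esymm n = ∏ i, x i := by
    have h := Multiset.esymm_card (Finset.univ.val.map x)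
    rwa [Multiset.card_map, Finset.card_val, Finset.card_univ, Fintype.card_fin] at h
  rw [div_self (by positivity), hsMean_one hn hx, hprod]
  simp [hsB]

theorem ofReal_hsB_mul_esymm_rpow_le_hsMean_and_eq_iff {n k : ℕ} (hk : 0 < k) (hkn : k ≤ n)
    {x : Fin n → ℝ} (hx : ∀ i, 0 ≤ x i) (hanti : Antitone x) :
    ENNReal.ofReal (hsB (k / n) * (Finset.univ.val.map x).esymm k ^ (k : ℝ)⁻¹) ≤
        hsMean (k / n) x ∧
      (ENNReal.ofReal (hsB (k / n) * (Finset.univ.val.map x).esymm k ^ (k : ℝ)⁻¹) =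
          hsMean (k / n) x ↔ (∃ h : k < n, x ⟨k, h⟩ = 0) ∨ k = n) := by
  rcases hkn.lt_or_eq with hkn | rfl
  · by_cases hxk : x ⟨k, hkn⟩ = 0
    · have heq := le_antisymm (ofReal_hsB_mul_esymm_rpow_le_hsMean hk hkn hx)
        (hsMean_le_ofReal_hsB_mul_esymm_rpow hk hkn hx
          fun j hj ↦ esymm_eq_zero_of_antitone hkn hx hanti hxk hj)
      exact ⟨heq.le, iff_of_true heq (Or.inl ⟨hkn, hxk⟩)⟩
    · have hlt := ofReal_hsB_mul_esymm_rpow_lt_hsMean hk hkn hx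
        (esymm_succ_pos_of_antitone hkn hx hanti ((hx _).lt_of_ne' hxk))
      refine ⟨hlt.le, iff_of_false hlt.ne ?_⟩
      rintro (⟨_, h⟩ | h)
      exacts [hxk h, hkn.ne h]
  · have heq := ofReal_hsB_mul_esymm_self_rpow_eq_hsMean hk hx
    exact ⟨heq.le, iff_of_true heq (Or.inr rfl)⟩

/-- Theorem (main upper inequality, with equality cases).
If `x₁ ≥ ⋯ ≥ x_n ≥ 0` and `1 ≤ k ≤ n`, then
`sym_k(x) ≤ (C(n,k)^{-1/k} / B(k/n)) · hsm_{k/n}(x)`, with equality iff `x_{k+1} = 0` or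
`k = n`. -/
theorem sym_le_hsm {n k : ℕ} (hk1 : 1 ≤ k) (hkn : k ≤ n) (x : Fin n → ℝ)
    (hx0 : ∀ i, 0 ≤ x i) (hmono : ∀ i j : Fin n, i ≤ j → x j ≤ x i) :
    ENNReal.ofReal (symMean k x) ≤
        ENNReal.ofReal ((n.choose k : ℝ) ^ (-(k : ℝ)⁻¹) / hsB ((k : ℝ) / n)) *
          hsMean ((k : ℝ) / n) x ∧
      (ENNReal.ofReal (symMean k x) =
          ENNReal.ofReal ((n.choose k : ℝ) ^ (-(k : ℝ)⁻¹) / hsB ((k : ℝ) / n)) *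
            hsMean ((k : ℝ) / n) x ↔
        ((∃ h : k < n, x ⟨k, h⟩ = 0) ∨ k = n)) := by
  have hC : (0 : ℝ) < n.choose k := by exact_mod_cast Nat.choose_pos hkn
  have hB := hsB_natCast_div_pos hk1 hkn
  have hE := Multiset.esymm_nonneg (by simpa using hx0) k (s := Finset.univ.val.map x)
  have ha : 0 < (n.choose k : ℝ) ^ (-(k : ℝ)⁻¹) / hsB (k / n) := by positivity
  have hsym : symMean k x = (n.choose k : ℝ) ^ (-(k : ℝ)⁻¹) / hsB (k / n) *
      (hsB (k / n) * (Finset.univ.val.map x).esymm k ^ (k : ℝ)⁻¹) := by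
    rw [symMean, ← Finset.esymm_map_val, Real.div_rpow hE hC.le, Real.rpow_neg hC.le]
    field_simp
  rw [hsym, ENNReal.ofReal_mul ha.le,
    ENNReal.mul_le_mul_iff_right (ENNReal.ofReal_pos.2 ha).ne' ENNReal.ofReal_ne_top,
    ENNReal.mul_right_inj (ENNReal.ofReal_pos.2 ha).ne' ENNReal.ofReal_ne_top]
  exact ofReal_hsB_mul_esymm_rpow_le_hsMean_and_eq_iff hk1 hkn hx0 hmono
end

section
/- For all integers n ≥ k ≥ 1, one has 1 ≤ C(n,k)^{−1/k} / B(k/n) < (9k)^{1/(2k)}, and the left inequality is an equality if and only if k = n. -/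
open MeasureTheory Filter Topology
open scoped ENNReal

/-! With `c = k/n` and `m = n - k` one has `B(c)^k = k^k m^m / n^n`, so the `k`-th power of the
ratio is `n^n / (C(n,k) k^k m^m)`. The lower bound says that one term of the binomial expansion of
`(k + m)^n` is at most the whole sum, strictly so unless `m = 0`. The upper bound comes from
Stirling's bounds `√(2πn) (n/e)^n ≤ n! ≤ e √n (n/e)^n`, which give
`n^n / (C(n,k) k^k m^m) ≤ e² / √(2π) · √(km/n) < 3 √k`, because `e⁴ < 18π`. -/

open Nat Real

theorem hsB_of_ne_zero {c : ℝ} (hc : c ≠ 0) : hsB c = c * (1 - c) ^ ((1 - c) / c) := by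
  rw [hsB, if_neg hc]
  split_ifs with h1
  · simp [h1]
  · rfl

theorem hsB_nonneg {c : ℝ} (h0 : 0 ≤ c) (h1 : c ≤ 1) : 0 ≤ hsB c := by
  rcases eq_or_ne c 0 with rfl | hc
  · simp [hsB]
  · rw [hsB_of_ne_zero hc]
    exact mul_nonneg h0 (rpow_nonneg (sub_nonneg.2 h1) _)

theorem hsB_div_pow {k m : ℕ} (hk : k ≠ 0) :
    hsB ((k : ℝ) / (k + m : ℕ)) ^ k
      = (k : ℝ) ^ k * (m : ℝ) ^ m / ((k + m : ℕ) : ℝ) ^ (k + m) := by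
  have hk' : (k : ℝ) ≠ 0 := by exact_mod_cast hk
  have hn : ((k + m : ℕ) : ℝ) ≠ 0 := by positivity
  have hsub : 1 - (k : ℝ) / (k + m : ℕ) = m / (k + m : ℕ) := by field_simp; push_cast; ring
  have hexp : (1 - (k : ℝ) / (k + m : ℕ)) / (k / (k + m : ℕ)) * k = m := by
    rw [hsub]; field_simp
  rw [hsB_of_ne_zero (by positivity), mul_pow, ← rpow_natCast (_ ^ _),
    ← rpow_mul (by rw [hsub]; positivity), hexp, rpow_natCast, hsub, div_pow, div_pow, pow_add]
  field_simp

theorem rpow_neg_inv_div_hsB_pow {k m : ℕ} (hk : k ≠ 0) {x : ℝ} (hx : 0 ≤ x) :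
    (x ^ (-(k : ℝ)⁻¹) / hsB ((k : ℝ) / (k + m : ℕ))) ^ k
      = ((k + m : ℕ) : ℝ) ^ (k + m) / (x * ((k : ℝ) ^ k * (m : ℝ) ^ m)) := by
  rw [div_pow, hsB_div_pow hk, rpow_neg hx, inv_pow, rpow_inv_natCast_pow hx hk]
  field_simp

theorem rpow_inv_two_mul_pow {x : ℝ} (hx : 0 ≤ x) {k : ℕ} (hk : k ≠ 0) :
    (x ^ (2 * k : ℝ)⁻¹) ^ k = √x := by
  rw [← rpow_natCast, ← rpow_mul hx, sqrt_eq_rpow]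
  field_simp

theorem choose_mul_pow_mul_pow_le_add_pow (x y k m : ℕ) :
    (k + m).choose k * (x ^ k * y ^ m) ≤ (x + y) ^ (k + m) := by
  rw [add_pow]
  refine le_of_eq_of_le ?_ (Finset.single_le_sum
    (f := fun i => x ^ i * y ^ (k + m - i) * (k + m).choose i)
    (fun _ _ => Nat.zero_le _) (Finset.mem_range.2 (by omega : k < k + m + 1)))
  rw [Nat.add_sub_cancel_left]
  ring

theorem choose_mul_pow_mul_pow_lt_add_pow {x k m : ℕ} (y : ℕ) (hx : x ≠ 0) (hm : m ≠ 0) :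
    (k + m).choose k * (x ^ k * y ^ m) < (x + y) ^ (k + m) := by
  rw [add_pow]
  refine lt_of_eq_of_lt ?_ (Finset.single_lt_sum
    (f := fun i => x ^ i * y ^ (k + m - i) * (k + m).choose i)
    (j := k + m) (by omega) (Finset.mem_range.2 (by omega : k < k + m + 1))
    (Finset.mem_range.2 (by omega)) (by simp [Nat.pos_of_ne_zero hx]) (fun _ _ _ => Nat.zero_le _))
  rw [Nat.add_sub_cancel_left]
  ring

theorem factorial_le_exp_one_mul_sqrt_mul {n : ℕ} (hn : n ≠ 0) :
    (n ! : ℝ) ≤ exp 1 * √n * (n / exp 1) ^ n := by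
  obtain ⟨n, rfl⟩ := Nat.exists_eq_add_one_of_ne_zero hn
  have h : Stirling.stirlingSeq (n + 1) ≤ Stirling.stirlingSeq 1 :=
    Stirling.stirlingSeq'_antitone (Nat.zero_le n)
  rw [Stirling.stirlingSeq_one, Stirling.stirlingSeq, div_le_iff₀ (by positivity)] at h
  refine h.trans_eq ?_
  rw [sqrt_mul zero_le_two]
  field_simp

theorem exp_one_pow_four_lt : exp 1 ^ 4 < 18 * π := by
  have he : exp 1 ^ 4 < 2.7182818286 ^ 4 :=
    pow_lt_pow_left₀ exp_one_lt_d9 (exp_pos 1).le (by norm_num)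
  nlinarith [pi_gt_d6]

theorem exp_one_sq_mul_sqrt_lt {m n : ℕ} (hmn : m ≤ n) (hn : n ≠ 0) :
    exp 1 ^ 2 * √m < 3 * √(2 * π * n) := by
  refine lt_of_pow_lt_pow_left₀ 2 (by positivity) ?_
  have hmn' : (m : ℝ) ≤ n := by exact_mod_cast hmn
  rw [mul_pow, mul_pow, sq_sqrt (by positivity), sq_sqrt (by positivity), ← pow_mul]
  calc exp 1 ^ (2 * 2) * m ≤ exp 1 ^ 4 * n := by gcongr
    _ < 18 * π * n := by gcongr; exact exp_one_pow_four_lt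
    _ = 3 ^ 2 * (2 * π * n) := by ring

theorem pow_lt_three_mul_sqrt_mul_choose_mul_pow_mul_pow {k m : ℕ} (hk : k ≠ 0) :
    ((k + m : ℕ) : ℝ) ^ (k + m)
      < 3 * √k * ((k + m).choose k * ((k : ℝ) ^ k * (m : ℝ) ^ m)) := by
  have hk' : (1 : ℝ) ≤ k := by exact_mod_cast Nat.one_le_iff_ne_zero.2 hk
  rcases eq_or_ne m 0 with rfl | hm
  · have : 1 < 3 * √k := by nlinarith [one_le_sqrt.2 hk']
    simpa using (lt_mul_iff_one_lt_left (by positivity)).2 this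
  set n := k + m with hn
  have hfact : ((n.choose k : ℕ) : ℝ) * k ! * m ! = n ! := by
    have := Nat.choose_mul_factorial_mul_factorial (Nat.le_add_right k m)
    rw [Nat.add_sub_cancel_left] at this
    exact_mod_cast this
  have hpow : ((k : ℝ) / exp 1) ^ k * ((m : ℝ) / exp 1) ^ m * (n : ℝ) ^ n
      = (k : ℝ) ^ k * (m : ℝ) ^ m * ((n : ℝ) / exp 1) ^ n := by
    rw [div_pow, div_pow, div_pow, hn, pow_add (exp 1)]
    field_simp
  refine lt_of_mul_lt_mul_right ?_ (by positivity : (0 : ℝ) ≤ k ! * m !)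
  calc (n : ℝ) ^ n * (k ! * m !)
      ≤ (n : ℝ) ^ n * (exp 1 * √k * (k / exp 1) ^ k * (exp 1 * √m * (m / exp 1) ^ m)) := by
        gcongr
        exacts [factorial_le_exp_one_mul_sqrt_mul hk, factorial_le_exp_one_mul_sqrt_mul hm]
    _ = exp 1 ^ 2 * √m * (√k * ((k : ℝ) ^ k * (m : ℝ) ^ m * ((n : ℝ) / exp 1) ^ n)) := by
        rw [← hpow]; ring
    _ < 3 * √(2 * π * n) * (√k * ((k : ℝ) ^ k * (m : ℝ) ^ m * ((n : ℝ) / exp 1) ^ n)) :=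
        mul_lt_mul_of_pos_right (exp_one_sq_mul_sqrt_lt (Nat.le_add_left m k) (by omega))
          (by positivity)
    _ = 3 * √k * (√(2 * π * n) * ((n : ℝ) / exp 1) ^ n) * ((k : ℝ) ^ k * (m : ℝ) ^ m) :=
        by ring
    _ ≤ 3 * √k * n ! * ((k : ℝ) ^ k * (m : ℝ) ^ m) := by
        gcongr
        exact Stirling.le_factorial_stirling n
    _ = 3 * √k * (n.choose k * ((k : ℝ) ^ k * (m : ℝ) ^ m)) * (k ! * m !) := by
        rw [← hfact]; ring

/-- For all integers `n ≥ k ≥ 1`,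
`1 ≤ C(n,k)^{-1/k} / B(k/n) < (9k)^{1/(2k)}`, with equality on the left iff `k = n`. -/
theorem binom_hsB_bounds (n k : ℕ) (hk1 : 1 ≤ k) (hkn : k ≤ n) :
    1 ≤ (n.choose k : ℝ) ^ (-(k : ℝ)⁻¹) / hsB ((k : ℝ) / n) ∧
    (n.choose k : ℝ) ^ (-(k : ℝ)⁻¹) / hsB ((k : ℝ) / n) < (9 * k : ℝ) ^ ((2 * k : ℝ))⁻¹ ∧
    ((1 : ℝ) = (n.choose k : ℝ) ^ (-(k : ℝ)⁻¹) / hsB ((k : ℝ) / n) ↔ k = n) := by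
  obtain ⟨m, rfl⟩ := Nat.exists_eq_add_of_le hkn
  have hk : k ≠ 0 := Nat.one_le_iff_ne_zero.1 hk1
  set R := ((k + m).choose k : ℝ) ^ (-(k : ℝ)⁻¹) / hsB ((k : ℝ) / (k + m : ℕ))
  set D := ((k + m).choose k : ℝ) * ((k : ℝ) ^ k * (m : ℝ) ^ m) with hD_def
  have hR : 0 ≤ R := div_nonneg (by positivity) (hsB_nonneg (by positivity)
    (div_le_one_of_le₀ (by exact_mod_cast Nat.le_add_right k m) (by positivity)))
  have hD : 0 < D := by
    rw [hD_def]
    exact_mod_cast Nat.mul_pos (Nat.choose_pos (Nat.le_add_right k m))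
      (Nat.mul_pos Nat.pow_self_pos Nat.pow_self_pos)
  have hRk : R ^ k = ((k + m : ℕ) : ℝ) ^ (k + m) / D :=
    rpow_neg_inv_div_hsB_pow hk (by positivity)
  refine ⟨?_, ?_, ?_⟩
  · rw [← one_le_pow_iff_of_nonneg hR hk, hRk, one_le_div hD, hD_def]
    exact_mod_cast choose_mul_pow_mul_pow_le_add_pow k m k m
  · rw [← pow_lt_pow_iff_left₀ hR (by positivity) hk, hRk,
      rpow_inv_two_mul_pow (by positivity) hk, sqrt_mul (by norm_num),
      show √9 = 3 by rw [sqrt_eq_iff_mul_self_eq] <;> norm_num,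
      div_lt_iff₀ hD]
    exact pow_lt_three_mul_sqrt_mul_choose_mul_pow_mul_pow hk
  · rw [eq_comm, ← pow_eq_one_iff_of_nonneg hR hk, hRk, div_eq_one_iff_eq hD.ne', left_eq_add,
      hD_def]
    refine ⟨fun h => ?_, fun h => by subst h; simp⟩
    by_contra hm
    exact (choose_mul_pow_mul_pow_lt_add_pow (k := k) m hk hm).ne (by exact_mod_cast h.symm)
end

section
/- Let c ∈ (0,1) and let μ be a Borel probability measure on [0,∞) with ∫ log(1+x) dμ(x) < ∞ and μ({0}) < 1 − c (subcritical case). Then the equation ∫ x/(c·x + (1−c)·η) dμ(x) = 1 has a unique solution η = η(μ,c) in (0,∞); the infimum inf_{y>0} ∫ K(x,y,c) dμ(x) is attained at y = η and at no other point; and consequently [μ]_c = exp ∫ K(x,η,c) dμ(x). -/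
open MeasureTheory Filter Topology
open scoped ENNReal

/-!
Write `K(x, y, c) = (1 - 1/c) log y + (1/c) log (c x + (1 - c) y)`. As a function of `log y` this
is convex with derivative `1 - x / (c x + (1 - c) y)`, so
`K(x, y, c) ≥ K(x, η, c) + (1 - x / (c x + (1 - c) η)) log (y / η)`, strictly when `x > 0` and
`y ≠ η`. Integrating against `μ`, the linear term vanishes exactly when `η` solves
`∫ x / (c x + (1 - c) η) dμ = 1`, which makes `η` the strict minimiser. The left side of that
equation is continuous and strictly decreasing in `η`, tends to `0` as `η → ∞` and to
`(1 - μ{0}) / c > 1` as `η → 0⁺`, so it has exactly one solution.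
-/

open Set Real

lemma integral_lt_integral_of_ae_le_of_measure_setOf_lt_ne_zero {α : Type*} [MeasurableSpace α]
    {μ : Measure α} {f g : α → ℝ} (hf : Integrable f μ) (hg : Integrable g μ) (hle : f ≤ᵐ[μ] g)
    (hlt : μ {x | f x < g x} ≠ 0) : ∫ x, f x ∂μ < ∫ x, g x ∂μ := by
  rw [← sub_pos, ← integral_sub hg hf, integral_pos_iff_support_of_nonneg_ae
    (hle.mono fun x => sub_nonneg.2) (hg.sub hf)]
  exact pos_iff_ne_zero.2 (mt (measure_mono_null fun x hx => (sub_pos.2 hx).ne') hlt)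

lemma mul_log_le_log_mul_add_one_sub {s r : ℝ} (hs0 : 0 ≤ s) (hs1 : s ≤ 1) (hr : 0 < r) :
    s * log r ≤ log (s * r + (1 - s)) := by
  simpa using strictConcaveOn_log_Ioi.concaveOn.2 (mem_Ioi.2 hr) (mem_Ioi.2 one_pos) hs0
    (sub_nonneg.2 hs1) (add_sub_cancel s 1)

lemma mul_log_lt_log_mul_add_one_sub {s r : ℝ} (hs0 : 0 < s) (hs1 : s < 1) (hr : 0 < r)
    (hr1 : r ≠ 1) : s * log r < log (s * r + (1 - s)) := by
  simpa using strictConcaveOn_log_Ioi.2 (mem_Ioi.2 hr) (mem_Ioi.2 one_pos) hr1 hs0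
    (sub_pos.2 hs1) (add_sub_cancel s 1)

noncomputable def hsKernelReal (c y x : ℝ) : ℝ :=
  (1 - c⁻¹) * log y + c⁻¹ * log (c * x + (1 - c) * y)

/-- `1 - hsRatio c y x` is the derivative of `hsKernelReal c y x` with respect to `log y`. -/
noncomputable def hsRatio (c y x : ℝ) : ℝ := x / (c * x + (1 - c) * y)

section Pointwise

variable {c x y η : ℝ}

lemma mul_add_one_sub_mul_pos (hc : c ∈ Ioo 0 1) (hx : 0 ≤ x) (hy : 0 < y) :
    0 < c * x + (1 - c) * y :=
  add_pos_of_nonneg_of_pos (mul_nonneg hc.1.le hx) (mul_pos (sub_pos.2 hc.2) hy)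

lemma hsKernel_eq_coe_hsKernelReal (hc : c ∈ Ioo 0 1) (hx : 0 ≤ x) (hy : 0 < y) :
    hsKernel c x y = hsKernelReal c y x := by
  have hD := mul_add_one_sub_mul_pos hc hx hy
  have harg : c * y⁻¹ * x + 1 - c = (c * x + (1 - c) * y) / y := by field_simp; ring
  rw [hsKernel, if_neg hc.1.ne', elogr, harg, if_neg (div_pos hD hy).not_ge,
    log_div hD.ne' hy.ne', ← EReal.coe_mul, ← EReal.coe_add, hsKernelReal]
  congr 1
  ring

lemma mul_hsRatio_lt_one (hc : c ∈ Ioo 0 1) (hx : 0 ≤ x) (hy : 0 < y) :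
    c * hsRatio c y x < 1 := by
  rw [hsRatio, mul_div_assoc', div_lt_one (mul_add_one_sub_mul_pos hc hx hy)]
  linarith [mul_pos (sub_pos.2 hc.2) hy]

lemma hsRatio_nonneg (hc : c ∈ Ioo 0 1) (hx : 0 ≤ x) (hy : 0 < y) : 0 ≤ hsRatio c y x :=
  div_nonneg hx (mul_add_one_sub_mul_pos hc hx hy).le

lemma norm_hsRatio_le (hc : c ∈ Ioo 0 1) (hx : 0 ≤ x) (hy : 0 < y) : ‖hsRatio c y x‖ ≤ c⁻¹ := by
  rw [norm_of_nonneg (hsRatio_nonneg hc hx hy), ← mul_one c⁻¹, le_inv_mul_iff₀ hc.1]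
  exact (mul_hsRatio_lt_one hc hx hy).le

lemma hsRatio_le_hsRatio (hc : c ∈ Ioo 0 1) (hx : 0 ≤ x) (hy : 0 < y) (hyη : y ≤ η) :
    hsRatio c η x ≤ hsRatio c y x :=
  div_le_div_of_nonneg_left hx (mul_add_one_sub_mul_pos hc hx hy)
    (by nlinarith [sub_pos.2 hc.2])

lemma hsRatio_lt_hsRatio (hc : c ∈ Ioo 0 1) (hx : 0 < x) (hy : 0 < y) (hyη : y < η) :
    hsRatio c η x < hsRatio c y x :=
  div_lt_div_of_pos_left hx (mul_add_one_sub_mul_pos hc hx.le hy)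
    (by nlinarith [sub_pos.2 hc.2])

lemma continuousAt_hsRatio (hD : c * x + (1 - c) * y ≠ 0) :
    ContinuousAt (fun y => hsRatio c y x) y :=
  continuousAt_const.div (by fun_prop) hD

/-- With `t = c * hsRatio c η x ∈ [0, 1)`, the right side is `c⁻¹` times the gap in the concavity
of `log` between the points `y / η` and `1` with weights `1 - t` and `t`. -/
lemma hsKernelReal_sub_sub_eq (hc : c ∈ Ioo 0 1) (hx : 0 ≤ x) (hη : 0 < η) (hy : 0 < y) :
    hsKernelReal c y x - hsKernelReal c η x - (1 - hsRatio c η x) * log (y / η) =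
      c⁻¹ * (log ((1 - c * hsRatio c η x) * (y / η) + c * hsRatio c η x) -
        (1 - c * hsRatio c η x) * log (y / η)) := by
  have hDη := mul_add_one_sub_mul_pos hc hx hη
  have hsplit : c * x + (1 - c) * y = (c * x + (1 - c) * η) *
      ((1 - c * hsRatio c η x) * (y / η) + c * hsRatio c η x) := by
    rw [hsRatio]; field_simp; ring
  have hpos : 0 < (1 - c * hsRatio c η x) * (y / η) + c * hsRatio c η x :=
    add_pos_of_pos_of_nonneg (mul_pos (sub_pos.2 (mul_hsRatio_lt_one hc hx hη)) (div_pos hy hη))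
      (mul_nonneg hc.1.le (hsRatio_nonneg hc hx hη))
  rw [hsKernelReal, hsKernelReal, hsplit, log_mul hDη.ne' hpos.ne', log_div hy.ne' hη.ne']
  linear_combination (-(log y - log η) * hsRatio c η x) * mul_inv_cancel₀ hc.1.ne'

lemma hsKernelReal_tangent_le (hc : c ∈ Ioo 0 1) (hx : 0 ≤ x) (hη : 0 < η) (hy : 0 < y) :
    hsKernelReal c η x + (1 - hsRatio c η x) * log (y / η) ≤ hsKernelReal c y x := by
  have hconc := mul_log_le_log_mul_add_one_sub (sub_nonneg.2 (mul_hsRatio_lt_one hc hx hη).le)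
    (sub_le_self _ (mul_nonneg hc.1.le (hsRatio_nonneg hc hx hη))) (div_pos hy hη)
  rw [sub_sub_cancel] at hconc
  have := hsKernelReal_sub_sub_eq hc hx hη hy
  linarith [mul_nonneg (inv_nonneg.2 hc.1.le) (sub_nonneg.2 hconc)]

lemma hsKernelReal_tangent_lt (hc : c ∈ Ioo 0 1) (hx : 0 < x) (hη : 0 < η) (hy : 0 < y)
    (hne : y ≠ η) :
    hsKernelReal c η x + (1 - hsRatio c η x) * log (y / η) < hsKernelReal c y x := by
  have hconc := mul_log_lt_log_mul_add_one_sub (sub_pos.2 (mul_hsRatio_lt_one hc hx.le hη))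
    (sub_lt_self _ (mul_pos hc.1 (div_pos hx (mul_add_one_sub_mul_pos hc hx.le hη))))
    (div_pos hy hη) (by rwa [ne_eq, div_eq_one_iff_eq hη.ne'])
  rw [sub_sub_cancel] at hconc
  have := hsKernelReal_sub_sub_eq hc hx.le hη hy
  linarith [mul_pos (inv_pos.2 hc.1) (sub_pos.2 hconc)]

end Pointwise

section Integrals

variable {c y η : ℝ} {μ : Measure ℝ}

lemma integrable_log_mul_add [IsFiniteMeasure μ] {a b : ℝ} (ha : 0 ≤ a) (hb : 0 < b)
    (h0 : ∀ᵐ x ∂μ, 0 ≤ x) (hint : Integrable (fun x => log (1 + x)) μ) :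
    Integrable (fun x => log (a * x + b)) μ := by
  refine ((integrable_const (|log b| + log (1 + a / b))).add hint).mono'
    (by fun_prop : Measurable fun x => log (a * x + b)).aestronglyMeasurable ?_
  filter_upwards [h0] with x hx
  have hk : 0 ≤ a / b := div_nonneg ha hb.le
  have hsplit : a * x + b = b * (1 + a / b * x) := by field_simp; ring
  have hlog0 : 0 ≤ log (1 + a / b * x) := log_nonneg (by nlinarith [mul_nonneg hk hx])
  have hlog1 : log (1 + a / b * x) ≤ log (1 + a / b) + log (1 + x) := by
    rw [← log_mul (by positivity) (by positivity)]
    exact log_le_log (by positivity) (by nlinarith [mul_nonneg hk hx])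
  rw [hsplit, log_mul hb.ne' (by positivity : 0 < 1 + a / b * x).ne', norm_eq_abs]
  calc |log b + log (1 + a / b * x)| ≤ |log b| + |log (1 + a / b * x)| := abs_add_le _ _
    _ ≤ |log b| + log (1 + a / b) + log (1 + x) := by rw [abs_of_nonneg hlog0]; linarith

lemma integrable_hsKernelReal [IsFiniteMeasure μ] (hc : c ∈ Ioo 0 1) (hy : 0 < y)
    (h0 : ∀ᵐ x ∂μ, 0 ≤ x) (hint : Integrable (fun x => log (1 + x)) μ) :
    Integrable (hsKernelReal c y) μ :=
  (integrable_const _).add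
    ((integrable_log_mul_add hc.1.le (mul_pos (sub_pos.2 hc.2) hy) h0 hint).const_mul c⁻¹)

lemma measurable_hsRatio (c y : ℝ) : Measurable (hsRatio c y) := by
  unfold hsRatio
  fun_prop

lemma integrable_hsRatio [IsFiniteMeasure μ] (hc : c ∈ Ioo 0 1) (hy : 0 < y)
    (h0 : ∀ᵐ x ∂μ, 0 ≤ x) : Integrable (hsRatio c y) μ :=
  Integrable.of_bound (measurable_hsRatio c y).aestronglyMeasurable c⁻¹
    (h0.mono fun _ hx => norm_hsRatio_le hc hx hy)

lemma integral_hsRatio_strictAntiOn [IsFiniteMeasure μ] (hc : c ∈ Ioo 0 1)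
    (h0 : ∀ᵐ x ∂μ, 0 ≤ x) (hpos : μ (Ioi 0) ≠ 0) :
    StrictAntiOn (fun y => ∫ x, hsRatio c y x ∂μ) (Ioi 0) := fun _ hy₁ _ hy₂ h12 =>
  integral_lt_integral_of_ae_le_of_measure_setOf_lt_ne_zero (integrable_hsRatio hc hy₂ h0)
    (integrable_hsRatio hc hy₁ h0) (h0.mono fun _ hx => hsRatio_le_hsRatio hc hx hy₁ h12.le)
    fun h => hpos (measure_mono_null (fun _ hx => hsRatio_lt_hsRatio hc hx hy₁ h12) h)

lemma tendsto_integral_hsRatio [IsFiniteMeasure μ] {l : Filter ℝ} [l.IsCountablyGenerated]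
    {F : ℝ → ℝ} (hc : c ∈ Ioo 0 1) (h0 : ∀ᵐ x ∂μ, 0 ≤ x) (hl : ∀ᶠ y in l, 0 < y)
    (hF : ∀ᵐ x ∂μ, Tendsto (fun y => hsRatio c y x) l (𝓝 (F x))) :
    Tendsto (fun y => ∫ x, hsRatio c y x ∂μ) l (𝓝 (∫ x, F x ∂μ)) :=
  tendsto_integral_filter_of_dominated_convergence (fun _ => c⁻¹)
    (Eventually.of_forall fun y => (measurable_hsRatio c y).aestronglyMeasurable)
    (hl.mono fun _ hy => h0.mono fun _ hx => norm_hsRatio_le hc hx hy) (integrable_const _) hF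

lemma continuousOn_integral_hsRatio [IsFiniteMeasure μ] (hc : c ∈ Ioo 0 1)
    (h0 : ∀ᵐ x ∂μ, 0 ≤ x) : ContinuousOn (fun y => ∫ x, hsRatio c y x ∂μ) (Ioi 0) :=
  fun _ hy => tendsto_integral_hsRatio hc h0 self_mem_nhdsWithin <| h0.mono fun _ hx =>
    (continuousAt_hsRatio (mul_add_one_sub_mul_pos hc hx hy).ne').continuousWithinAt

lemma tendsto_integral_hsRatio_atTop [IsFiniteMeasure μ] (hc : c ∈ Ioo 0 1)
    (h0 : ∀ᵐ x ∂μ, 0 ≤ x) : Tendsto (fun y => ∫ x, hsRatio c y x ∂μ) atTop (𝓝 0) := by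
  simpa using tendsto_integral_hsRatio (F := 0) hc h0 (eventually_gt_atTop 0) <|
    ae_of_all _ fun x => by
      simpa [hsRatio, div_eq_mul_inv] using (tendsto_atTop_add_const_left _ (c * x)
        (tendsto_id.const_mul_atTop (sub_pos.2 hc.2))).inv_tendsto_atTop.const_mul x

lemma tendsto_integral_hsRatio_nhdsGT_zero [IsProbabilityMeasure μ] (hc : c ∈ Ioo 0 1)
    (h0 : ∀ᵐ x ∂μ, 0 ≤ x) :
    Tendsto (fun y => ∫ x, hsRatio c y x ∂μ) (𝓝[>] 0) (𝓝 ((1 - μ.real {0}) / c)) := by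
  have hF : ∀ᵐ x ∂μ, Tendsto (fun y => hsRatio c y x) (𝓝[>] 0)
      (𝓝 (({0}ᶜ : Set ℝ).indicator (fun _ => c⁻¹) x)) := by
    filter_upwards [h0] with x hx
    rcases hx.eq_or_lt with rfl | hx
    · simp [hsRatio]
    · have hval : hsRatio c 0 x = c⁻¹ := by
        rw [hsRatio, mul_zero, add_zero, div_mul_cancel_right₀ hx.ne']
      rw [indicator_of_mem hx.ne', ← hval]
      exact (continuousAt_hsRatio (by simp [hc.1.ne', hx.ne'])).continuousWithinAt
  have hlim : ∫ x, ({0}ᶜ : Set ℝ).indicator (fun _ => c⁻¹) x ∂μ = (1 - μ.real {0}) / c := by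
    rw [integral_indicator_const _ (measurableSet_singleton 0).compl,
      probReal_compl_eq_one_sub (measurableSet_singleton 0), smul_eq_mul, div_eq_mul_inv]
  rw [← hlim]
  exact tendsto_integral_hsRatio hc h0 self_mem_nhdsWithin hF

lemma exists_integral_hsRatio_eq_one [IsProbabilityMeasure μ] (hc : c ∈ Ioo 0 1)
    (h0 : ∀ᵐ x ∂μ, 0 ≤ x) (hsub : μ {0} < ENNReal.ofReal (1 - c)) :
    ∃ η, 0 < η ∧ ∫ x, hsRatio c η x ∂μ = 1 := by
  have hlim : 1 < (1 - μ.real {0}) / c := by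
    have h := (ENNReal.lt_ofReal_iff_toReal_lt (measure_ne_top μ _)).1 hsub
    rw [← measureReal_def] at h
    rw [one_lt_div hc.1]
    linarith
  obtain ⟨a, ha1, ha⟩ := (((tendsto_integral_hsRatio_nhdsGT_zero hc h0).eventually_const_lt
    hlim).and self_mem_nhdsWithin).exists
  obtain ⟨b, hb1, hab⟩ := (((tendsto_integral_hsRatio_atTop hc h0).eventually_lt_const
    one_pos).and (eventually_gt_atTop a)).exists
  obtain ⟨η, hη, hη1⟩ := intermediate_value_Icc' hab.le
    ((continuousOn_integral_hsRatio hc h0).mono fun _ hz => lt_of_lt_of_le ha hz.1)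
    ⟨hb1.le, ha1.le⟩
  exact ⟨η, lt_of_lt_of_le ha hη.1, hη1⟩

lemma integral_hsKernelReal_lt [IsProbabilityMeasure μ] (hc : c ∈ Ioo 0 1)
    (h0 : ∀ᵐ x ∂μ, 0 ≤ x) (hint : Integrable (fun x => log (1 + x)) μ) (hpos : μ (Ioi 0) ≠ 0)
    (hη : 0 < η) (hη1 : ∫ x, hsRatio c η x ∂μ = 1) (hy : 0 < y) (hne : y ≠ η) :
    ∫ x, hsKernelReal c η x ∂μ < ∫ x, hsKernelReal c y x ∂μ := by
  have hlin : Integrable (fun x => (1 - hsRatio c η x) * log (y / η)) μ :=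
    ((integrable_const 1).sub (integrable_hsRatio hc hη h0)).mul_const _
  have hmean : ∫ x, (1 - hsRatio c η x) * log (y / η) ∂μ = 0 := by
    rw [integral_mul_const, integral_sub (integrable_const 1) (integrable_hsRatio hc hη h0), hη1]
    simp
  calc ∫ x, hsKernelReal c η x ∂μ
      = ∫ x, (hsKernelReal c η x + (1 - hsRatio c η x) * log (y / η)) ∂μ := by
        rw [integral_add (integrable_hsKernelReal hc hη h0 hint) hlin, hmean, add_zero]
    _ < ∫ x, hsKernelReal c y x ∂μ :=
      integral_lt_integral_of_ae_le_of_measure_setOf_lt_ne_zero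
        ((integrable_hsKernelReal hc hη h0 hint).add hlin) (integrable_hsKernelReal hc hy h0 hint)
        (h0.mono fun _ hx => hsKernelReal_tangent_le hc hx hη hy)
        fun h => hpos (measure_mono_null (fun _ hx => hsKernelReal_tangent_lt hc hx hη hy hne) h)

end Integrals

section ExtendedIntegral

variable {μ : Measure ℝ}

lemma erealToENNReal_coe (r : ℝ) : erealToENNReal r = ENNReal.ofReal r := by
  simp [erealToENNReal]

lemma eIntegral_congr_ae {f g : ℝ → EReal} (h : f =ᵐ[μ] g) : eIntegral μ f = eIntegral μ g := by
  unfold eIntegral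
  congr 2 <;> exact lintegral_congr_ae (h.mono fun x hx => by simp only [hx])

lemma eIntegral_coe {f : ℝ → ℝ} (hf : Integrable f μ) :
    eIntegral μ (fun x => (f x : EReal)) = ((∫ x, f x ∂μ : ℝ) : EReal) := by
  have hfin : ∀ g : ℝ → ℝ, Integrable g μ → ∫⁻ x, ENNReal.ofReal (g x) ∂μ ≠ ⊤ := fun g hg =>
    ((lintegral_ofReal_le_lintegral_enorm g).trans_lt hg.2).ne
  simp only [eIntegral, ← EReal.coe_neg, erealToENNReal_coe]
  rw [integral_eq_lintegral_pos_part_sub_lintegral_neg_part hf, EReal.coe_sub,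
    EReal.coe_ennreal_toReal (hfin f hf), EReal.coe_ennreal_toReal (hfin (fun x => -f x) hf.neg)]

lemma eIntegral_hsKernel {c y : ℝ} (hc : c ∈ Ioo 0 1) (hy : 0 < y) (h0 : ∀ᵐ x ∂μ, 0 ≤ x)
    (hint : Integrable (hsKernelReal c y) μ) :
    eIntegral μ (fun x => hsKernel c x y) = ((∫ x, hsKernelReal c y x ∂μ : ℝ) : EReal) :=
  (eIntegral_congr_ae (h0.mono fun _ hx => hsKernel_eq_coe_hsKernelReal hc hx hy)).trans
    (eIntegral_coe hint)

end ExtendedIntegral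

lemma measure_Ioi_ne_zero_of_measure_Iio_eq_zero {μ : Measure ℝ} [IsProbabilityMeasure μ]
    (hneg : μ (Iio 0) = 0) (h0 : μ {0} < 1) : μ (Ioi 0) ≠ 0 := by
  intro hpos
  have : (1 : ℝ≥0∞) ≤ μ {0} := calc
    1 = μ (Iic 0 ∪ Ioi 0) := by rw [Iic_union_Ioi, measure_univ]
    _ ≤ μ (Iio 0) + μ {0} + μ (Ioi 0) := by
      rw [← Iio_union_right]
      exact (measure_union_le _ _).trans (by gcongr; exact measure_union_le _ _)
    _ = μ {0} := by rw [hneg, hpos, zero_add, add_zero]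
  exact this.not_gt h0

/-- in the subcritical case, the equation `∫ x/(cx+(1-c)η) dμ = 1` has a
unique positive solution `η`, the infimum defining `[μ]_c` is attained exactly at `η`,
and `[μ]_c = exp ∫ K(x,η,c) dμ`. -/
theorem hsBary_subcritical (c : ℝ) (hc : c ∈ Set.Ioo (0 : ℝ) 1) (μ : Measure ℝ)
    [IsProbabilityMeasure μ] (hsupp : μ (Set.Iio 0) = 0)
    (hint : Integrable (fun x => Real.log (1 + x)) μ)
    (hsub : μ {0} < ENNReal.ofReal (1 - c)) :
    ∃ η : ℝ, 0 < η ∧ (∫ x, x / (c * x + (1 - c) * η) ∂μ) = 1 ∧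
      (∀ η' : ℝ, 0 < η' → (∫ x, x / (c * x + (1 - c) * η') ∂μ) = 1 → η' = η) ∧
      (⨅ y : {y : ℝ // 0 < y}, eIntegral μ (fun x => hsKernel c x y)) =
        eIntegral μ (fun x => hsKernel c x η) ∧
      (∀ y : ℝ, 0 < y → y ≠ η →
        eIntegral μ (fun x => hsKernel c x η) < eIntegral μ (fun x => hsKernel c x y)) ∧
      hsBary c μ = eexp (eIntegral μ (fun x => hsKernel c x η)) := by
  have h0 : ∀ᵐ x ∂μ, 0 ≤ x := measure_mono_null (fun x (hx : ¬0 ≤ x) => not_le.1 hx) hsupp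
  have hpos : μ (Ioi 0) ≠ 0 := measure_Ioi_ne_zero_of_measure_Iio_eq_zero hsupp
    (hsub.trans_le (ENNReal.ofReal_le_one.2 (sub_le_self _ hc.1.le)))
  obtain ⟨η, hη, hη1⟩ := exists_integral_hsRatio_eq_one hc h0 hsub
  have hker : ∀ y, 0 < y → eIntegral μ (fun x => hsKernel c x y) =
      ((∫ x, hsKernelReal c y x ∂μ : ℝ) : EReal) := fun y hy =>
    eIntegral_hsKernel hc hy h0 (integrable_hsKernelReal hc hy h0 hint)
  have hlt : ∀ y, 0 < y → y ≠ η →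
      eIntegral μ (fun x => hsKernel c x η) < eIntegral μ (fun x => hsKernel c x y) :=
    fun y hy hne => by
      rw [hker η hη, hker y hy, EReal.coe_lt_coe_iff]
      exact integral_hsKernelReal_lt hc h0 hint hpos hη hη1 hy hne
  have hinf : (⨅ y : {y : ℝ // 0 < y}, eIntegral μ (fun x => hsKernel c x y)) =
      eIntegral μ (fun x => hsKernel c x η) :=
    le_antisymm (iInf_le_of_le ⟨η, hη⟩ le_rfl) <| le_iInf fun y =>
      (eq_or_ne (y : ℝ) η).elim (fun h => by rw [h]) fun h => (hlt y y.2 h).le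
  refine ⟨η, hη, hη1, fun η' hη' h => ?_, hinf, hlt, by rw [hsBary, hinf]⟩
  exact (integral_hsRatio_strictAntiOn hc h0 hpos).injOn hη' hη (h.trans hη1.symm)
end

section
/- Fix c ∈ [0,1]. For Borel probability measures μ, ν on [0,∞) with ∫ log(1+x) dμ(x) < ∞ and ∫ log(1+x) dν(x) < ∞, and any t ∈ [0,1], one has [(1−t)·μ + t·ν]_c ≥ [μ]_c^{1−t} · [ν]_c^{t}; that is, the HS barycenter is a log-concave function of the measure. -/
open MeasureTheory Filter Topology
open scoped ENNReal

/-! For each `y`, the kernel integral `μ ↦ ∫ K(x, y, c) dμ(x)` is additive and positively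
homogeneous in `μ`, so its infimum over `y` is concave in `μ`. Since
`eexp (s * a + u * b) = eexp a ^ s * eexp b ^ u`, the barycenter is log-concave. -/

lemma eexp_coe (r : ℝ) : eexp r = ENNReal.ofReal (Real.exp r) := by
  simp [eexp]

lemma eexp_bot : eexp ⊥ = 0 := by simp [eexp]

lemma eexp_top : eexp ⊤ = ⊤ := by simp [eexp]

lemma eexp_mono : Monotone eexp := by
  intro a b h
  induction b using EReal.rec with
  | bot => rw [le_bot_iff.mp h]
  | top => exact eexp_top ▸ le_top
  | coe b =>
    induction a using EReal.rec with
    | bot => exact eexp_bot ▸ zero_le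
    | top => exact absurd (top_le_iff.mp h) (EReal.coe_ne_top b)
    | coe a =>
      rw [eexp_coe, eexp_coe]
      exact ENNReal.ofReal_le_ofReal (Real.exp_le_exp.mpr (EReal.coe_le_coe_iff.mp h))

lemma eexp_add (a b : EReal) : eexp (a + b) = eexp a * eexp b := by
  induction a using EReal.rec <;> induction b using EReal.rec <;>
    simp [eexp_bot, eexp_top, eexp_coe, ← EReal.coe_add, Real.exp_add, ENNReal.ofReal_mul,
      Real.exp_pos, Real.exp_nonneg]

lemma eexp_coe_mul {s : ℝ} (hs : 0 ≤ s) (a : EReal) : eexp (s * a) = eexp a ^ s := by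
  rcases hs.eq_or_lt with rfl | hs
  · rw [EReal.coe_zero, zero_mul, ENNReal.rpow_zero, ← EReal.coe_zero, eexp_coe]
    simp
  induction a using EReal.rec with
  | bot => simp [EReal.coe_mul_bot_of_pos hs, eexp_bot, hs]
  | top => simp [EReal.coe_mul_top_of_pos hs, eexp_top, hs]
  | coe a =>
    rw [← EReal.coe_mul, eexp_coe, eexp_coe, ENNReal.ofReal_rpow_of_pos (Real.exp_pos a),
      ← Real.exp_mul, mul_comm]

-- `⊤ + ⊥ = ⊥` in `EReal`, so an infinite negative part on either side makes both sides `⊥`.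
lemma eIntegral_add_measure (μ ν : Measure ℝ) (f : ℝ → EReal) :
    eIntegral (μ + ν) f = eIntegral μ f + eIntegral ν f := by
  simp only [eIntegral, lintegral_add_measure, EReal.coe_ennreal_add, sub_eq_add_neg]
  rw [EReal.neg_add (.inl (EReal.coe_ennreal_ne_bot _)) (.inr (EReal.coe_ennreal_ne_bot _)),
    sub_eq_add_neg, add_add_add_comm]

lemma eIntegral_smul_measure {s : ℝ} (hs : 0 ≤ s) (μ : Measure ℝ) (f : ℝ → EReal) :
    eIntegral (ENNReal.ofReal s • μ) f = s * eIntegral μ f := by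
  simp only [eIntegral, lintegral_smul_measure, smul_eq_mul, EReal.coe_ennreal_mul,
    EReal.coe_ennreal_ofReal, max_eq_left hs]
  exact (EReal.mul_sub_of_nonneg_of_ne_top (EReal.coe_nonneg.mpr hs) (EReal.coe_ne_top s)).symm

theorem hsBary_logConcave_measure_general (c : ℝ)
    (μ ν : Measure ℝ)
    (t : ℝ) (ht : t ∈ Set.Icc (0 : ℝ) 1) :
    hsBary c μ ^ (1 - t) * hsBary c ν ^ t ≤
      hsBary c (ENNReal.ofReal (1 - t) • μ + ENNReal.ofReal t • ν) := by
  obtain ⟨ht0, ht1⟩ := ht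
  have hs0 : 0 ≤ 1 - t := sub_nonneg.mpr ht1
  rw [hsBary, hsBary, ← eexp_coe_mul hs0, ← eexp_coe_mul ht0, ← eexp_add, hsBary]
  refine eexp_mono (le_iInf fun y => ?_)
  rw [eIntegral_add_measure, eIntegral_smul_measure hs0, eIntegral_smul_measure ht0]
  exact add_le_add (mul_le_mul_of_nonneg_left (iInf_le _ y) (EReal.coe_nonneg.mpr hs0))
    (mul_le_mul_of_nonneg_left (iInf_le _ y) (EReal.coe_nonneg.mpr ht0))

/-- the HS barycenter is a log-concave function of the measure. -/
theorem hsBary_logConcave_measure (c : ℝ) (hc : c ∈ Set.Icc (0 : ℝ) 1)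
    (μ ν : Measure ℝ) [IsProbabilityMeasure μ] [IsProbabilityMeasure ν]
    (hsuppμ : μ (Set.Iio 0) = 0) (hsuppν : ν (Set.Iio 0) = 0)
    (hintμ : Integrable (fun x => Real.log (1 + x)) μ)
    (hintν : Integrable (fun x => Real.log (1 + x)) ν)
    (t : ℝ) (ht : t ∈ Set.Icc (0 : ℝ) 1) :
    hsBary c μ ^ (1 - t) * hsBary c ν ^ t ≤
      hsBary c (ENNReal.ofReal (1 - t) • μ + ENNReal.ofReal t • ν) :=
  hsBary_logConcave_measure_general c μ ν t ht
end
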